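/- Given two non-negative integers n and k with n ≥ k > 1, a non-decreasing sequence R = [r₁, r₂, ..., r_n] of non-negative integers is the losing score sequence of some k-hypertournament on n vertices if and only if for each j with 1 ≤ j ≤ n, ∑_{i=1}^{j} r_i ≥ C(j,k), with equality when j = n (where C(j,k) denotes the binomial coefficient, taken to be 0 when j < k). -/

import Mathlib

/-! Necessity: every arc inside a set `U` of vertices is lost by a vertex of `U`, and the arcs
inside `U` correspond to the `k`-subsets of `U`; taking for `U` the vertices with the `j` smallest
scores gives `∑_{i<j} r i ≥ C(j,k)`, and the total is at most the number `C(n,k)` of arcs.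

Sufficiency: by Hall's theorem applied to the `k`-sets on one side and `r v` copies of each vertex
`v` on the other, every `k`-set can choose one of its members so that `v` is chosen at most `r v`
times. The Hall condition for a family `A` of `k`-sets with union `W` is
`|A| ≤ C(|W|,k) ≤ ∑_{i<|W|} r i ≤ ∑_{v ∈ W} r v`, the last step because `r` is non-decreasing;
the equality of totals then forces `v` to be chosen exactly `r v` times. Listing each `k`-set with
its chosen vertex last gives the hypertournament. -/

/-- A k-hypertournament on the vertex set `Fin n`: a set of arcs, each a
duplicate-free k-tuple (list) of vertices, such that for every k-subset `S` of
the vertices there is exactly one arc whose set of entries is `S`. -/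
structure Hypertournament (n k : ℕ) where
  arcs : Finset (List (Fin n))
  nodup : ∀ e ∈ arcs, e.Nodup
  len : ∀ e ∈ arcs, e.length = k
  complete : ∀ S : Finset (Fin n), S.card = k → ∃! e, e ∈ arcs ∧ e.toFinset = S

/-- The losing score of a vertex `v`: the number of arcs containing `v` in which
`v` is the last entry. -/
def losingScore {n k : ℕ} (H : Hypertournament n k) (v : Fin n) : ℕ :=
  (H.arcs.filter (fun e => e.getLast? = some v)).card

/-- `r` (on indices `< n`) lists, up to order, the losing scores of the vertices
of some k-hypertournament. -/
def IsLosingScoreSequence (n k : ℕ) (r : ℕ → ℕ) : Prop :=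
  ∃ (H : Hypertournament n k) (σ : Equiv.Perm (Fin n)),
    ∀ i : Fin n, r i.val = losingScore H (σ i)

open Finset

theorem Finset.sum_range_card_le_sum_of_monotoneOn {M : Type*} [AddCommMonoid M] [PartialOrder M]
    [IsOrderedAddMonoid M] {r : ℕ → M} {n : ℕ} (hr : MonotoneOn r (Set.Iio n))
    (s : Finset ℕ) (hs : ∀ i ∈ s, i < n) : ∑ i ∈ range #s, r i ≤ ∑ i ∈ s, r i := by
  induction s using Finset.induction_on_max with
  | empty => simp
  | insert a s has ih =>
    have ha : a ∉ s := fun h => (has a h).false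
    have hcard : #s ≤ a := by simpa using card_le_card (fun x hx => mem_range.2 (has x hx))
    have han : a < n := hs a (mem_insert_self a s)
    rw [card_insert_of_notMem ha, sum_range_succ, sum_insert ha, add_comm]
    exact add_le_add (hr (hcard.trans_lt han) han hcard)
      (ih fun i hi => hs i (mem_insert_of_mem hi))

theorem Finset.exists_mem_forall_card_fiber_le {ι α : Type*} [DecidableEq α] [Fintype ι]
    (t : ι → Finset α) (c : α → ℕ) (h : ∀ s : Finset ι, #s ≤ ∑ a ∈ s.biUnion t, c a) :
    ∃ f : ι → α, (∀ i, f i ∈ t i) ∧ ∀ a, #{i | f i = a} ≤ c a := by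
  let slots : ι → Finset (Σ _ : α, ℕ) := fun i => (t i).sigma fun a => range (c a)
  have hall : ∀ s : Finset ι, #s ≤ #(s.biUnion slots) := by
    intro s
    have : s.biUnion slots = (s.biUnion t).sigma fun a => range (c a) := by
      ext ⟨a, m⟩
      simp only [mem_biUnion, mem_sigma, mem_range, slots]
      tauto
    simpa [this] using h s
  obtain ⟨g, hg_inj, hg⟩ := (all_card_le_biUnion_card_iff_exists_injective slots).1 hall
  simp only [slots, mem_sigma, mem_range] at hg
  refine ⟨fun i => (g i).1, fun i => (hg i).1, fun a => ?_⟩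
  calc #{i | (g i).1 = a} ≤ #(range (c a)) := by
        refine card_le_card_of_injOn (fun i => (g i).2) ?_ ?_
        · intro i hi
          simp only [coe_filter, mem_univ, true_and, Set.mem_ofPred_eq] at hi
          simpa [← hi] using (hg i).2
        · intro i hi j hj hij
          simp only [coe_filter, mem_univ, true_and, Set.mem_ofPred_eq] at hi hj
          exact hg_inj (Sigma.ext (hi.trans hj.symm) (heq_of_eq hij))
    _ = c a := card_range _

section ChoiceArc

variable {α : Type*} [LinearOrder α]

def choiceArc (S : Finset α) (v : α) : List α := (S.erase v).sort ++ [v]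

theorem toFinset_choiceArc {S : Finset α} {v : α} (hv : v ∈ S) :
    (choiceArc S v).toFinset = S := by
  simp [choiceArc, Finset.insert_erase hv]

theorem nodup_choiceArc (S : Finset α) (v : α) : (choiceArc S v).Nodup := by
  simp +contextual [choiceArc, List.nodup_append]

theorem length_choiceArc {S : Finset α} {v : α} (hv : v ∈ S) :
    (choiceArc S v).length = #S := by
  simp [choiceArc, card_erase_of_mem hv, Nat.sub_add_cancel (card_pos.2 ⟨v, hv⟩)]

theorem getLast?_choiceArc (S : Finset α) (v : α) :
    (choiceArc S v).getLast? = some v :=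
  List.getLast?_concat

end ChoiceArc

namespace Hypertournament

variable {n k : ℕ}

theorem card_filter_toFinset_subset (H : Hypertournament n k) (U : Finset (Fin n)) :
    #{e ∈ H.arcs | e.toFinset ⊆ U} = (#U).choose k := by
  rw [← card_powersetCard k U]
  refine card_bij (fun e _ => e.toFinset) ?_ ?_ ?_
  · intro e he
    rw [mem_filter] at he
    rw [mem_powersetCard, List.toFinset_card_of_nodup (H.nodup e he.1), H.len e he.1]
    exact ⟨he.2, rfl⟩
  · intro e₁ he₁ e₂ he₂ h
    rw [mem_filter] at he₁ he₂
    have hcard : #e₁.toFinset = k := by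
      rw [List.toFinset_card_of_nodup (H.nodup e₁ he₁.1), H.len e₁ he₁.1]
    exact (H.complete _ hcard).unique ⟨he₁.1, rfl⟩ ⟨he₂.1, h.symm⟩
  · intro S hS
    rw [mem_powersetCard] at hS
    obtain ⟨e, ⟨he, rfl⟩, -⟩ := H.complete S hS.2
    exact ⟨e, mem_filter.2 ⟨he, hS.1⟩, rfl⟩

theorem card_arcs (H : Hypertournament n k) : #H.arcs = n.choose k := by
  simpa using H.card_filter_toFinset_subset univ

theorem sum_losingScore (H : Hypertournament n k) (U : Finset (Fin n)) :
    ∑ v ∈ U, losingScore H v = #{e ∈ H.arcs | ∃ v ∈ U, e.getLast? = some v} := by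
  unfold losingScore
  rw [← card_biUnion]
  · congr 1
    ext e
    simp only [mem_biUnion, mem_filter]
    tauto
  · intro v _ w _ hvw
    refine disjoint_filter.2 fun e _ hv hw => hvw ?_
    simpa [hv] using hw

theorem choose_card_le_sum_losingScore (hk : 0 < k) (H : Hypertournament n k)
    (U : Finset (Fin n)) : (#U).choose k ≤ ∑ v ∈ U, losingScore H v := by
  rw [sum_losingScore, ← H.card_filter_toFinset_subset U]
  refine card_le_card fun e he => ?_
  rw [mem_filter] at he ⊢
  have hne : e ≠ [] := by
    rintro rfl
    simpa [hk.ne] using H.len _ he.1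
  exact ⟨he.1, e.getLast hne, he.2 (List.mem_toFinset.2 (e.getLast_mem hne)),
    List.getLast?_eq_some_getLast hne⟩

theorem sum_losingScore_le (H : Hypertournament n k) :
    ∑ v, losingScore H v ≤ n.choose k := by
  rw [sum_losingScore, ← H.card_arcs]
  exact card_filter_le _ _

def ofChoice (F : {S : Finset (Fin n) // #S = k} → Fin n) (hF : ∀ S, F S ∈ S.1) :
    Hypertournament n k where
  arcs := univ.image fun S => choiceArc S.1 (F S)
  nodup := by
    simp only [mem_image, mem_univ, true_and, forall_exists_index]
    rintro _ S rfl
    exact nodup_choiceArc _ _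
  len := by
    simp only [mem_image, mem_univ, true_and, forall_exists_index]
    rintro _ S rfl
    rw [length_choiceArc (hF S), S.2]
  complete := by
    intro S hS
    refine ⟨choiceArc S (F ⟨S, hS⟩), ⟨mem_image_of_mem _ (mem_univ _),
      toFinset_choiceArc (hF ⟨S, hS⟩)⟩, ?_⟩
    simp only [mem_image, mem_univ, true_and, and_imp, forall_exists_index]
    rintro _ S' rfl hS'
    rw [toFinset_choiceArc (hF S')] at hS'
    obtain rfl : S' = ⟨S, hS⟩ := Subtype.ext hS'
    rfl

theorem losingScore_ofChoice (F : {S : Finset (Fin n) // #S = k} → Fin n)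
    (hF : ∀ S, F S ∈ S.1) (v : Fin n) :
    losingScore (ofChoice F hF) v = #{S | F S = v} := by
  have hinj : Function.Injective fun S : {S : Finset (Fin n) // #S = k} => choiceArc S.1 (F S) :=
    fun S T h => Subtype.ext <| by
      simpa [toFinset_choiceArc (hF S), toFinset_choiceArc (hF T)] using congrArg List.toFinset h
  rw [losingScore, ofChoice, filter_image, card_image_of_injective _ hinj]
  simp [getLast?_choiceArc]

end Hypertournament

theorem Finset.card_le_choose_card_biUnion {α : Type*} [DecidableEq α] {k : ℕ}
    (A : Finset {S : Finset α // #S = k}) : #A ≤ (#(A.biUnion Subtype.val)).choose k := by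
  rw [← card_powersetCard]
  refine card_le_card_of_injOn Subtype.val (fun S hS => ?_) Subtype.val_injective.injOn
  exact mem_powersetCard.2 ⟨subset_biUnion_of_mem Subtype.val hS, S.2⟩

namespace IsLosingScoreSequence

variable {n k : ℕ} {r : ℕ → ℕ}

theorem choose_le_sum_range (h : IsLosingScoreSequence n k r) (hk : 0 < k) {j : ℕ}
    (hj : j ≤ n) : j.choose k ≤ ∑ i ∈ range j, r i := by
  obtain ⟨H, σ, hσ⟩ := h
  let e : Fin j ↪ Fin n := (Fin.castLEEmb hj).trans σ.toEmbedding
  calc j.choose k = (#(univ.map e)).choose k := by simp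
    _ ≤ ∑ v ∈ univ.map e, losingScore H v := H.choose_card_le_sum_losingScore hk _
    _ = ∑ i ∈ range j, r i := by
      rw [sum_map, ← Fin.sum_univ_eq_sum_range]
      simp [e, ← hσ]

theorem sum_range_eq_choose (h : IsLosingScoreSequence n k r) (hk : 0 < k) :
    ∑ i ∈ range n, r i = n.choose k := by
  refine le_antisymm ?_ (h.choose_le_sum_range hk le_rfl)
  obtain ⟨H, σ, hσ⟩ := h
  rw [← Fin.sum_univ_eq_sum_range, Fintype.sum_congr _ _ hσ, Equiv.sum_comp σ (losingScore H)]
  exact H.sum_losingScore_le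

end IsLosingScoreSequence

theorem isLosingScoreSequence_of_choose_le_sum_range {n k : ℕ} {r : ℕ → ℕ} (hk : 0 < k)
    (hr : MonotoneOn r (Set.Iio n))
    (hle : ∀ j, 1 ≤ j → j ≤ n → j.choose k ≤ ∑ i ∈ range j, r i)
    (hsum : ∑ i ∈ range n, r i = n.choose k) : IsLosingScoreSequence n k r := by
  have hall (A : Finset {S : Finset (Fin n) // #S = k}) :
      #A ≤ ∑ v ∈ A.biUnion Subtype.val, r v := by
    set W := A.biUnion Subtype.val
    calc #A ≤ (#W).choose k := card_le_choose_card_biUnion A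
      _ ≤ ∑ i ∈ range #W, r i := by
        rcases (#W).eq_zero_or_pos with hW | hW
        · simp [hW, Nat.choose_eq_zero_of_lt hk]
        · exact hle _ hW (card_le_univ W |>.trans_eq (Fintype.card_fin n))
      _ ≤ ∑ v ∈ W, r v := by
        simpa using sum_range_card_le_sum_of_monotoneOn hr (W.map Fin.valEmbedding) (by simp)
  obtain ⟨F, hF, hF_le⟩ := exists_mem_forall_card_fiber_le _ _ hall
  have hF_sum : ∑ v, #{S | F S = v} = ∑ v : Fin n, r v := by
    rw [← card_eq_sum_card_fiberwise (fun _ _ => mem_univ _), Fin.sum_univ_eq_sum_range (r ·),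
      hsum, card_univ, Fintype.card_finset_len, Fintype.card_fin]
  have hF_eq := (sum_eq_sum_iff_of_le fun v _ => hF_le v).1 hF_sum
  exact ⟨.ofChoice F hF, Equiv.refl _, fun v => by
    simp [Hypertournament.losingScore_ofChoice, hF_eq v (mem_univ v)]⟩

theorem losing_score_sequence_iff_general (n k : ℕ) (hk : 1 < k)
    (r : ℕ → ℕ) (hr : ∀ i j, i ≤ j → j < n → r i ≤ r j) :
    IsLosingScoreSequence n k r ↔
      ((∀ j, 1 ≤ j → j ≤ n → Nat.choose j k ≤ ∑ i ∈ Finset.range j, r i) ∧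
        ∑ i ∈ Finset.range n, r i = Nat.choose n k) := by
  have hk₀ : 0 < k := by omega
  refine ⟨fun h => ⟨fun j _ hj => h.choose_le_sum_range hk₀ hj, h.sum_range_eq_choose hk₀⟩,
    fun ⟨hle, hsum⟩ => isLosingScoreSequence_of_choose_le_sum_range hk₀ ?_ hle hsum⟩
  exact fun i hi j hj hij => hr i j hij hj

/-- Theorem 1.1 (Zhou, Yao, Zhang): a non-decreasing sequence `r 0, …, r (n-1)` of
non-negative integers is a losing score sequence of some k-hypertournament iff
`∑_{i<j} r i ≥ C(j,k)` for all `1 ≤ j ≤ n`, with equality when `j = n`. -/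
theorem losing_score_sequence_iff (n k : ℕ) (hk : 1 < k) (hn : k ≤ n)
    (r : ℕ → ℕ) (hr : ∀ i j, i ≤ j → j < n → r i ≤ r j) :
    IsLosingScoreSequence n k r ↔
      ((∀ j, 1 ≤ j → j ≤ n → Nat.choose j k ≤ ∑ i ∈ Finset.range j, r i) ∧
        ∑ i ∈ Finset.range n, r i = Nat.choose n k) :=
  losing_score_sequence_iff_general n k hk r hr
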